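/- Let S = {j_1, …, j_m} be an su(2) block for ψ. Then for each l ∈ {1, …, m} there exist U_{j_l}, V_{j_l}, W_{j_l} ∈ su(2) satisfying the bracket relations [U_{j_l}, V_{j_l}] = W_{j_l}, [V_{j_l}, W_{j_l}] = U_{j_l}, [W_{j_l}, U_{j_l}] = V_{j_l}, such that the three elements of g_S whose component at qubit j_l is U_{j_l} (respectively V_{j_l}, respectively W_{j_l}) for each l, and whose components at all other qubits and u(1)-component are zero, all lie in K_ψ. -/

import Mathlib

open scoped Matrix

noncomputable section

/-- The `n`-qubit Hilbert space `(ℂ²)^{⊗n}`, realized as functions `(Fin n → Fin 2) → ℂ`. -/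
abbrev QState (n : ℕ) := (Fin n → Fin 2) → ℂ

/-- The ambient real vector space `ℝ × (Fin n → M₂(ℂ))` containing `u(1) ⊕ su(2)^n`. -/
abbrev GV (n : ℕ) := ℝ × (Fin n → Matrix (Fin 2) (Fin 2) ℂ)

/-- `su(2)`: traceless skew-Hermitian `2 × 2` complex matrices, as a real subspace. -/
def su2 : Submodule ℝ (Matrix (Fin 2) (Fin 2) ℂ) where
  carrier := {X | Xᴴ = -X ∧ X.trace = 0}
  add_mem' := by
    rintro X Y ⟨hX1, hX2⟩ ⟨hY1, hY2⟩
    exact ⟨by rw [Matrix.conjTranspose_add, hX1, hY1, neg_add],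
           by rw [Matrix.trace_add, hX2, hY2, add_zero]⟩
  zero_mem' := ⟨by simp, by simp⟩
  smul_mem' := by
    rintro r X ⟨hX1, hX2⟩
    exact ⟨by rw [Matrix.conjTranspose_smul, hX1, star_trivial, smul_neg],
           by rw [Matrix.trace_smul, hX2, smul_zero]⟩

/-- The Lie algebra `g = u(1) ⊕ su(2)^n` as a real subspace of `GV n`. -/
def gSub (n : ℕ) : Submodule ℝ (GV n) :=
  (⊤ : Submodule ℝ ℝ).prod (Submodule.pi Set.univ fun _ => su2)

/-- `g_S`: elements `(0, X)` of `g` with `X j = 0` for `j ∉ S`. -/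
def gS {n : ℕ} (S : Set (Fin n)) : Submodule ℝ (GV n) :=
  (⊥ : Submodule ℝ ℝ).prod (Submodule.pi Set.univ fun j =>
    letI := Classical.dec (j ∈ S)
    if j ∈ S then su2 else ⊥)

/-- `ḡ_S`: elements `(t, X)` of `g` with `X j = 0` for `j ∈ S`. -/
def gBar {n : ℕ} (S : Set (Fin n)) : Submodule ℝ (GV n) :=
  (⊤ : Submodule ℝ ℝ).prod (Submodule.pi Set.univ fun j =>
    letI := Classical.dec (j ∈ S)
    if j ∈ S then (⊥ : Submodule ℝ (Matrix (Fin 2) (Fin 2) ℂ)) else su2)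

/-- The projection `P_j : g → su(2)`, `(t, X) ↦ X j`. -/
def Pj {n : ℕ} (j : Fin n) : GV n →ₗ[ℝ] Matrix (Fin 2) (Fin 2) ℂ :=
  (LinearMap.proj j).comp (LinearMap.snd ℝ ℝ (Fin n → Matrix (Fin 2) (Fin 2) ℂ))

/-- Apply the matrix `X` to qubit `j` of the state `ψ`. -/
def applySingle {n : ℕ} (j : Fin n) (X : Matrix (Fin 2) (Fin 2) ℂ) (ψ : QState n) : QState n :=
  fun I => ∑ k : Fin 2, X (I j) k * ψ (Function.update I j k)

/-- The infinitesimal local-unitary action: `dΦ_ψ(t, X) = i t ψ + Σ_j X_j ψ`. -/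
def dPhi {n : ℕ} (ψ : QState n) : GV n →ₗ[ℝ] QState n where
  toFun x := fun I => Complex.I * (x.1 : ℂ) * ψ I + ∑ j, applySingle j (x.2 j) ψ I
  map_add' x y := by
    funext I
    simp only [applySingle, Prod.fst_add, Prod.snd_add, Pi.add_apply, Matrix.add_apply,
      Complex.ofReal_add, add_mul, Finset.sum_add_distrib]
    ring
  map_smul' r x := by
    funext I
    simp only [applySingle, Prod.smul_fst, Prod.smul_snd, Pi.smul_apply, Matrix.smul_apply,
      smul_eq_mul, Complex.real_smul, Complex.ofReal_mul, RingHom.id_apply,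
      Finset.mul_sum, mul_add]
    congr 1
    · ring
    · refine Finset.sum_congr rfl fun j _ => Finset.sum_congr rfl fun k _ => by ring

/-- The stabilizer subalgebra `K_ψ = {(t,X) ∈ g : dΦ_ψ(t,X) = 0}`. -/
def stab {n : ℕ} (ψ : QState n) : Submodule ℝ (GV n) :=
  gSub n ⊓ LinearMap.ker (dPhi ψ)

/-- The componentwise bracket on `g` (zero in the `u(1)` component). -/
def gBracket {n : ℕ} (x y : GV n) : GV n :=
  (0, fun j => ⁅x.2 j, y.2 j⁆)

/-- An `su(2)` block for `ψ`: a set `S` of qubits with `dim (K_ψ ∩ g_S) > 1` and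
`dim (K_ψ ∩ g_{S'}) = 0` for every proper subset `S' ⊊ S`. -/
def Su2Block {n : ℕ} (ψ : QState n) (S : Set (Fin n)) : Prop :=
  1 < Module.finrank ℝ ↥(stab ψ ⊓ gS S) ∧
  ∀ S' : Set (Fin n), S' ⊂ S → Module.finrank ℝ ↥(stab ψ ⊓ gS S') = 0

/-- The union `B` of all `su(2)` blocks for `ψ`. -/
def blockUnion {n : ℕ} (ψ : QState n) : Set (Fin n) :=
  {q | ∃ S : Set (Fin n), Su2Block ψ S ∧ q ∈ S}

/-- The number `p` of `su(2)` blocks for `ψ`. -/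
def blockCount {n : ℕ} (ψ : QState n) : ℕ :=
  {S : Set (Fin n) | Su2Block ψ S}.ncard

/-- `ψ` factors across the set `S` of qubits: `ψ(I) = φ(I|_S) · χ(I|_{Sᶜ})`. -/
def FactorsAcross {n : ℕ} (ψ : QState n) (S : Set (Fin n)) : Prop :=
  ∃ (φ : (↥S → Fin 2) → ℂ) (χ : (↥(Sᶜ) → Fin 2) → ℂ),
    ∀ I : Fin n → Fin 2, ψ I = φ (fun j => I j.1) * χ (fun j => I j.1)

/-- `ψ` is a nonproduct state: it factors across no proper nonempty set of qubits. -/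
def IsNonproduct {n : ℕ} (ψ : QState n) : Prop :=
  ∀ S : Set (Fin n), S ≠ ∅ → S ≠ Set.univ → ¬ FactorsAcross ψ S

/-- `ψ` has a single-qubit factor. -/
def HasSingleQubitFactor {n : ℕ} (ψ : QState n) : Prop :=
  ∃ j : Fin n, FactorsAcross ψ {j}

/-- Apply the local unitary (or just local linear) transformation `⊗_j U_j` to `ψ`. -/
def luApply {n : ℕ} (U : Fin n → Matrix (Fin 2) (Fin 2) ℂ) (ψ : QState n) : QState n :=
  fun I => ∑ J : Fin n → Fin 2, (∏ j, U j (I j) (J j)) * ψ J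

/-- Local unitary equivalence of `n`-qubit states. -/
def LUEquiv {n : ℕ} (ψ ψ' : QState n) : Prop :=
  ∃ U : Fin n → Matrix (Fin 2) (Fin 2) ℂ,
    (∀ j, U j ∈ Matrix.unitaryGroup (Fin 2) ℂ) ∧ ψ' = luApply U ψ

/-- The two-qubit singlet state `φ(a,b) = δ_{a0} δ_{b1} − δ_{a1} δ_{b0}`. -/
def singletFn : Fin 2 → Fin 2 → ℂ := fun a b =>
  if a = 0 ∧ b = 1 then 1 else if a = 1 ∧ b = 0 then -1 else 0

/-- `ψ` has a singlet factor: it is LU-equivalent to a state that factors across a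
two-element set of qubits, with the two-qubit factor being the singlet. -/
def HasSingletFactor {n : ℕ} (ψ : QState n) : Prop :=
  ∃ ψ' : QState n, LUEquiv ψ ψ' ∧ ∃ j k : Fin n, j ≠ k ∧
    ∃ χ : (↥(({j, k} : Set (Fin n))ᶜ) → Fin 2) → ℂ,
      ∀ I : Fin n → Fin 2, ψ' I = singletFn (I j) (I k) * χ (fun q => I q.1)

/-- The matrix `A = diag(i, −i) ∈ su(2)`. -/
def matA : Matrix (Fin 2) (Fin 2) ℂ := !![Complex.I, 0; 0, -Complex.I]

/-- The generalized `n`-qubit GHZ state `α|0…0⟩ + β|1…1⟩`. -/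
def ghz (n : ℕ) (α β : ℂ) : QState n := fun I =>
  if ∀ j, I j = 0 then α else if ∀ j, I j = 1 then β else 0

/-!
Fix a qubit `j₀ ∈ S`. By minimality of the block, `x ↦ x.2 j₀` is injective on
`K = K_ψ ∩ g_S`, and `K` is closed under the componentwise bracket: `dΦ_ψ` turns it into the
commutator of two operators having `ψ` as a common eigenvector, which kills `ψ`. Identifying
`su(2)` with `(ℝ³, ⨯)`, the image of `K` is a subspace of dimension at least two closed under the
cross product, hence all of `ℝ³`; preimages of the standard basis give `U`, `V`, `W`.
-/

open Matrix Module

theorem Submodule.eq_top_of_cross_mem (V : Submodule ℝ (Fin 3 → ℝ)) (hV : 1 < finrank ℝ V)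
    (hcross : ∀ a ∈ V, ∀ b ∈ V, a ⨯₃ b ∈ V) : V = ⊤ := by
  obtain ⟨x, hx⟩ := finrank_pos_iff_exists_ne_zero.1 (by omega : 0 < finrank ℝ V)
  obtain ⟨y, hxy⟩ := exists_linearIndependent_pair_of_one_lt_finrank hV hx
  have hab : LinearIndependent ℝ ![(x : Fin 3 → ℝ), y] := by
    have hcomp : V.subtype ∘ ![x, y] = ![(x : Fin 3 → ℝ), y] := by
      ext i : 1
      fin_cases i <;> rfl
    simpa only [hcomp] using hxy.map' V.subtype V.ker_subtype
  have hc : (x : Fin 3 → ℝ) ⨯₃ y ≠ 0 := crossProduct_ne_zero_iff_linearIndependent.2 hab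
  have hcab : LinearIndependent ℝ ![(x : Fin 3 → ℝ) ⨯₃ y, x, y] := by
    refine linearIndependent_finCons.2 ⟨hab, fun hmem => hc ?_⟩
    rw [range_cons_cons_empty] at hmem
    obtain ⟨s, t, hst⟩ := Submodule.mem_span_pair.1 hmem
    -- the cross product is orthogonal to the span of its factors
    refine dotProduct_self_eq_zero.1 ?_
    nth_rw 1 [← hst]
    simp only [add_dotProduct, smul_dotProduct, dot_self_cross, dot_cross_self, smul_zero,
      add_zero]
  have hspan : Submodule.span ℝ (Set.range ![(x : Fin 3 → ℝ) ⨯₃ y, x, y]) ≤ V := by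
    rw [Submodule.span_le, Set.range_subset_iff]
    intro i
    fin_cases i
    exacts [hcross _ x.2 _ y.2, x.2, y.2]
  have h3 : 3 ≤ finrank ℝ V := by
    simpa [finrank_span_eq_card hcab] using Submodule.finrank_mono hspan
  refine Submodule.eq_top_of_finrank_eq (le_antisymm (Submodule.finrank_le V) ?_)
  simpa using h3

theorem exists_cross_triple {M : Type*} [AddCommGroup M] [Module ℝ M] (K : Submodule ℝ M)
    (bracket : M → M → M) (L : M →ₗ[ℝ] Fin 3 → ℝ) (hL : ∀ x ∈ K, L x = 0 → x = 0)
    (hbracket : ∀ x ∈ K, ∀ y ∈ K, bracket x y ∈ K ∧ L (bracket x y) = L x ⨯₃ L y)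
    (hK : 1 < finrank ℝ K) :
    ∃ u ∈ K, ∃ v ∈ K, ∃ w ∈ K, bracket u v = w ∧ bracket v w = u ∧ bracket w u = v := by
  have hinj : Function.Injective (L.domRestrict K) := by
    rw [← LinearMap.ker_eq_bot, LinearMap.ker_eq_bot']
    exact fun x hx => Subtype.ext (hL x x.2 hx)
  have hrange : LinearMap.range (L.domRestrict K) = ⊤ := by
    refine Submodule.eq_top_of_cross_mem _ (by rwa [LinearMap.finrank_range_of_inj hinj]) ?_
    rintro _ ⟨x, rfl⟩ _ ⟨y, rfl⟩
    exact ⟨⟨_, (hbracket x x.2 y y.2).1⟩, (hbracket x x.2 y y.2).2⟩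
  have hsurj : ∀ e, ∃ x ∈ K, L x = e := fun e => by
    obtain ⟨x, hx⟩ := LinearMap.range_eq_top.1 hrange e
    exact ⟨x, x.2, hx⟩
  choose f hfK hfL using hsurj
  have hrel : ∀ e₁ e₂ e₃, e₁ ⨯₃ e₂ = e₃ → bracket (f e₁) (f e₂) = f e₃ := by
    intro e₁ e₂ e₃ he
    have hmem := (hbracket _ (hfK e₁) _ (hfK e₂)).1
    refine sub_eq_zero.1 (hL _ (K.sub_mem hmem (hfK e₃)) ?_)
    rw [map_sub, (hbracket _ (hfK e₁) _ (hfK e₂)).2, hfL, hfL, hfL, he, sub_self]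
  refine ⟨f ![1, 0, 0], hfK _, f ![0, 1, 0], hfK _, f ![0, 0, 1], hfK _,
    hrel _ _ _ ?_, hrel _ _ _ ?_, hrel _ _ _ ?_⟩ <;>
  simp [cross_apply]

lemma su2_entries {X : Matrix (Fin 2) (Fin 2) ℂ} (hX : X ∈ su2) :
    (X 0 0).re = 0 ∧ X 1 1 = -X 0 0 ∧ X 1 0 = -star (X 0 1) := by
  obtain ⟨hskew, htr⟩ := hX
  have e00 := congrFun (congrFun hskew 0) 0
  have e01 := congrFun (congrFun hskew 0) 1
  simp only [conjTranspose_apply, Matrix.neg_apply] at e00 e01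
  rw [trace_fin_two] at htr
  refine ⟨?_, eq_neg_of_add_eq_zero_right htr, ?_⟩
  · have := congrArg Complex.re e00
    simp only [RCLike.star_def, Complex.conj_re, Complex.neg_re] at this
    linarith
  · rw [← star_star (X 1 0), e01, star_neg]

lemma lie_mem_su2 {X Y : Matrix (Fin 2) (Fin 2) ℂ} (hX : X ∈ su2) (hY : Y ∈ su2) :
    ⁅X, Y⁆ ∈ su2 := by
  obtain ⟨hX, -⟩ := hX
  obtain ⟨hY, -⟩ := hY
  refine ⟨?_, by rw [Ring.lie_def, trace_sub, trace_mul_comm, sub_self]⟩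
  rw [Ring.lie_def, conjTranspose_sub, conjTranspose_mul, conjTranspose_mul, hX, hY,
    neg_mul_neg, neg_mul_neg, neg_sub]

/-- Inverse of `v ↦ -(i/2) (v₁ σ_x + v₂ σ_y + v₃ σ_z)`, which turns the commutator on `su(2)`
into the cross product. -/
def su2Coord : Matrix (Fin 2) (Fin 2) ℂ →ₗ[ℝ] Fin 3 → ℝ where
  toFun X := ![-2 * (X 0 1).im, -2 * (X 0 1).re, -2 * (X 0 0).im]
  map_add' X Y := by ext i; fin_cases i <;> simp <;> ring
  map_smul' r X := by ext i; fin_cases i <;> simp <;> ring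

lemma eq_zero_of_su2Coord_eq_zero {X : Matrix (Fin 2) (Fin 2) ℂ} (hX : X ∈ su2)
    (h : su2Coord X = 0) : X = 0 := by
  obtain ⟨h00, h11, h10⟩ := su2_entries hX
  have k0 := congrFun h 0
  have k1 := congrFun h 1
  have k2 := congrFun h 2
  simp only [su2Coord, LinearMap.coe_mk, AddHom.coe_mk, cons_val, Pi.zero_apply,
    mul_eq_zero, OfNat.ofNat_ne_zero, neg_eq_zero, false_or] at k0 k1 k2
  have e01 : X 0 1 = 0 := Complex.ext k1 k0
  have e00 : X 0 0 = 0 := Complex.ext h00 k2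
  ext i j
  fin_cases i <;> fin_cases j <;> simp [e00, e01, h11, h10]

lemma su2Coord_lie {X Y : Matrix (Fin 2) (Fin 2) ℂ} (hX : X ∈ su2) (hY : Y ∈ su2) :
    su2Coord ⁅X, Y⁆ = su2Coord X ⨯₃ su2Coord Y := by
  obtain ⟨hx1, hx2, hx3⟩ := su2_entries hX
  obtain ⟨hy1, hy2, hy3⟩ := su2_entries hY
  ext i
  fin_cases i <;>
  · simp [su2Coord, cross_apply, Ring.lie_def, mul_apply, Fin.sum_univ_two,
      hx2, hx3, hy2, hy3]
    rw [hx1, hy1]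
    ring

section Stabilizer

variable {n : ℕ}

def qubitOp (j : Fin n) (X : Matrix (Fin 2) (Fin 2) ℂ) : Module.End ℂ (QState n) where
  toFun := applySingle j X
  map_add' φ χ := by
    ext I
    simp only [applySingle, Pi.add_apply, mul_add, Finset.sum_add_distrib]
  map_smul' c φ := by
    ext I
    simp only [applySingle, Pi.smul_apply, smul_eq_mul, RingHom.id_apply, Finset.mul_sum]
    exact Finset.sum_congr rfl fun _ _ => by ring

lemma qubitOp_apply (j : Fin n) (X : Matrix (Fin 2) (Fin 2) ℂ) (φ : QState n) :
    qubitOp j X φ = applySingle j X φ := rfl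

lemma qubitOp_sub (j : Fin n) (X Y : Matrix (Fin 2) (Fin 2) ℂ) :
    qubitOp j (X - Y) = qubitOp j X - qubitOp j Y := by
  refine LinearMap.ext fun φ => funext fun I => ?_
  simp [qubitOp_apply, applySingle, sub_mul, Finset.sum_sub_distrib]

lemma qubitOp_mul (j : Fin n) (X Y : Matrix (Fin 2) (Fin 2) ℂ) :
    qubitOp j (X * Y) = qubitOp j X * qubitOp j Y := by
  refine LinearMap.ext fun φ => funext fun I => ?_
  simp only [Module.End.mul_apply, qubitOp_apply, applySingle, Finset.mul_sum, mul_apply,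
    Finset.sum_mul, Function.update_self, Function.update_idem]
  rw [Finset.sum_comm]
  exact Finset.sum_congr rfl fun _ _ => Finset.sum_congr rfl fun _ _ => by ring

lemma commute_qubitOp {j k : Fin n} (hjk : j ≠ k) (X Y : Matrix (Fin 2) (Fin 2) ℂ) :
    Commute (qubitOp j X) (qubitOp k Y) := by
  refine LinearMap.ext fun φ => funext fun I => ?_
  simp only [Module.End.mul_apply, qubitOp_apply, applySingle, Finset.mul_sum,
    Function.update_of_ne hjk, Function.update_of_ne hjk.symm]
  rw [Finset.sum_comm]
  refine Finset.sum_congr rfl fun _ _ => Finset.sum_congr rfl fun _ _ => ?_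
  rw [Function.update_comm hjk]
  ring

def localOp (X : Fin n → Matrix (Fin 2) (Fin 2) ℂ) : Module.End ℂ (QState n) :=
  ∑ j, qubitOp j (X j)

lemma localOp_lie (X Y : Fin n → Matrix (Fin 2) (Fin 2) ℂ) :
    localOp (fun j => ⁅X j, Y j⁆) = localOp X * localOp Y - localOp Y * localOp X := by
  simp only [localOp, Finset.sum_mul_sum, Ring.lie_def, qubitOp_sub, qubitOp_mul]
  rw [Finset.sum_comm (f := fun i j => qubitOp i (Y i) * qubitOp j (X j)),
    ← Finset.sum_sub_distrib]
  refine Finset.sum_congr rfl fun j _ => ?_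
  rw [← Finset.sum_sub_distrib, Finset.sum_eq_single j _ (by simp)]
  intro k _ hkj
  exact sub_eq_zero.2 (commute_qubitOp (Ne.symm hkj) _ _)

lemma dPhi_eq_zero_iff (ψ : QState n) (x : GV n) :
    dPhi ψ x = 0 ↔ localOp x.2 ψ = (-(Complex.I * x.1)) • ψ := by
  rw [neg_smul, eq_neg_iff_add_eq_zero, add_comm, funext_iff, funext_iff]
  simp [dPhi, localOp, qubitOp_apply, Finset.sum_apply]

lemma Module.End.commutator_apply_eq_zero_of_apply_eq_smul {R M : Type*} [CommRing R]
    [AddCommGroup M] [Module R M] {A B : Module.End R M} {v : M} {a b : R}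
    (hA : A v = a • v) (hB : B v = b • v) : (A * B - B * A) v = 0 := by
  rw [LinearMap.sub_apply, Module.End.mul_apply, Module.End.mul_apply, hA, hB,
    map_smul, map_smul, hA, hB, smul_smul, smul_smul, mul_comm, sub_self]

lemma gBracket_mem_stab {ψ : QState n} {x y : GV n} (hx : x ∈ stab ψ) (hy : y ∈ stab ψ) :
    gBracket x y ∈ stab ψ := by
  obtain ⟨hxg, hxker⟩ := Submodule.mem_inf.1 hx
  obtain ⟨hyg, hyker⟩ := Submodule.mem_inf.1 hy
  refine Submodule.mem_inf.2
    ⟨Submodule.mem_prod.2 ⟨trivial, Submodule.mem_pi.2 fun j _ => ?_⟩, ?_⟩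
  · exact lie_mem_su2 (Submodule.mem_pi.1 (Submodule.mem_prod.1 hxg).2 j trivial)
      (Submodule.mem_pi.1 (Submodule.mem_prod.1 hyg).2 j trivial)
  · rw [LinearMap.mem_ker, dPhi_eq_zero_iff] at hxker hyker ⊢
    simp only [gBracket, Complex.ofReal_zero, mul_zero, neg_zero, zero_smul]
    rw [localOp_lie]
    exact Module.End.commutator_apply_eq_zero_of_apply_eq_smul hxker hyker

end Stabilizer

section Blocks

variable {n : ℕ}

lemma mem_gS_iff {S : Set (Fin n)} {x : GV n} :
    x ∈ gS S ↔ x.1 = 0 ∧ (∀ j ∈ S, x.2 j ∈ su2) ∧ ∀ j ∉ S, x.2 j = 0 := by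
  classical
  simp only [gS, Submodule.mem_prod, Submodule.mem_bot, Submodule.mem_pi, Set.mem_univ,
    true_implies]
  refine and_congr_right fun _ => ⟨fun h => ⟨fun j hj => ?_, fun j hj => ?_⟩,
    fun h j => ?_⟩
  · simpa [hj] using h j
  · simpa [hj] using h j
  · by_cases hj : j ∈ S <;> simp [hj, h.1 j, h.2 j]

lemma gBracket_mem_stab_inf_gS {ψ : QState n} {S : Set (Fin n)} {x y : GV n}
    (hx : x ∈ stab ψ ⊓ gS S) (hy : y ∈ stab ψ ⊓ gS S) : gBracket x y ∈ stab ψ ⊓ gS S := by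
  obtain ⟨hxK, hxS⟩ := Submodule.mem_inf.1 hx
  obtain ⟨hyK, hyS⟩ := Submodule.mem_inf.1 hy
  obtain ⟨-, hxS, hxSc⟩ := mem_gS_iff.1 hxS
  obtain ⟨-, hyS, -⟩ := mem_gS_iff.1 hyS
  refine Submodule.mem_inf.2 ⟨gBracket_mem_stab hxK hyK, mem_gS_iff.2 ⟨rfl, ?_, ?_⟩⟩
  · exact fun j hj => lie_mem_su2 (hxS j hj) (hyS j hj)
  · intro j hj
    simp only [gBracket, hxSc j hj, Ring.lie_def, zero_mul, mul_zero, sub_zero]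

lemma Su2Block.nonempty {ψ : QState n} {S : Set (Fin n)} (hS : Su2Block ψ S) : S.Nonempty := by
  rw [Set.nonempty_iff_ne_empty]
  rintro rfl
  have hbot : stab ψ ⊓ gS (∅ : Set (Fin n)) = ⊥ := by
    refine eq_bot_iff.2 fun x hx => ?_
    obtain ⟨hx1, -, hx2⟩ := mem_gS_iff.1 (Submodule.mem_inf.1 hx).2
    exact Prod.ext hx1 (funext fun j => hx2 j (Set.notMem_empty j))
  have := hS.1
  rw [hbot, finrank_bot] at this
  omega

lemma Su2Block.eq_zero_of_apply_eq_zero {ψ : QState n} {S : Set (Fin n)} (hS : Su2Block ψ S)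
    {j : Fin n} (hj : j ∈ S) {x : GV n} (hx : x ∈ stab ψ ⊓ gS S) (hxj : x.2 j = 0) : x = 0 := by
  obtain ⟨hxK, hxS⟩ := Submodule.mem_inf.1 hx
  obtain ⟨hx1, hxS, hxSc⟩ := mem_gS_iff.1 hxS
  have hx' : x ∈ stab ψ ⊓ gS (S \ {j}) := by
    refine Submodule.mem_inf.2 ⟨hxK, mem_gS_iff.2 ⟨hx1, fun k hk => hxS k hk.1, fun k hk => ?_⟩⟩
    by_cases hkS : k ∈ S
    · rwa [show k = j by by_contra hkj; exact hk ⟨hkS, hkj⟩]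
    · exact hxSc k hkS
  rwa [Submodule.finrank_eq_zero.1 (hS.2 _ (Set.sdiff_singleton_ssubset.2 hj))] at hx'

end Blocks

theorem stmt0_general {n : ℕ} (ψ : QState n)
    (S : Set (Fin n)) (hS : Su2Block ψ S) :
    ∃ U V W : Fin n → Matrix (Fin 2) (Fin 2) ℂ,
      (∀ j ∉ S, U j = 0 ∧ V j = 0 ∧ W j = 0) ∧
      (∀ j ∈ S, U j ∈ su2 ∧ V j ∈ su2 ∧ W j ∈ su2 ∧
        ⁅U j, V j⁆ = W j ∧ ⁅V j, W j⁆ = U j ∧ ⁅W j, U j⁆ = V j) ∧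
      ((0 : ℝ), U) ∈ stab ψ ∧ ((0 : ℝ), V) ∈ stab ψ ∧ ((0 : ℝ), W) ∈ stab ψ := by
  obtain ⟨j₀, hj₀⟩ := hS.nonempty
  have hsu2 : ∀ x ∈ stab ψ ⊓ gS S, x.2 j₀ ∈ su2 := fun x hx =>
    (mem_gS_iff.1 (Submodule.mem_inf.1 hx).2).2.1 j₀ hj₀
  obtain ⟨u, hu, v, hv, w, hw, huv, hvw, hwu⟩ :=
    exists_cross_triple (stab ψ ⊓ gS S) gBracket (su2Coord ∘ₗ Pj j₀)
      (fun x hx h0 => hS.eq_zero_of_apply_eq_zero hj₀ hx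
        (eq_zero_of_su2Coord_eq_zero (hsu2 x hx) h0))
      (fun x hx y hy => ⟨gBracket_mem_stab_inf_gS hx hy,
        su2Coord_lie (hsu2 x hx) (hsu2 y hy)⟩)
      hS.1
  obtain ⟨hu0, huS, huSc⟩ := mem_gS_iff.1 (Submodule.mem_inf.1 hu).2
  obtain ⟨hv0, hvS, hvSc⟩ := mem_gS_iff.1 (Submodule.mem_inf.1 hv).2
  obtain ⟨hw0, hwS, hwSc⟩ := mem_gS_iff.1 (Submodule.mem_inf.1 hw).2
  refine ⟨u.2, v.2, w.2, fun j hj => ⟨huSc j hj, hvSc j hj, hwSc j hj⟩,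
    fun j hj => ⟨huS j hj, hvS j hj, hwS j hj, congrArg (·.2 j) huv, congrArg (·.2 j) hvw,
      congrArg (·.2 j) hwu⟩, ?_, ?_, ?_⟩
  · rw [← hu0]; exact (Submodule.mem_inf.1 hu).1
  · rw [← hv0]; exact (Submodule.mem_inf.1 hv).1
  · rw [← hw0]; exact (Submodule.mem_inf.1 hw).1

/-- If `S` is an `su(2)` block for `ψ`, then there exist `su(2)`-valued
families `U, V, W`, supported on `S`, satisfying the `su(2)` bracket relations at each
qubit of `S`, such that `(0, U)`, `(0, V)`, `(0, W)` all lie in `K_ψ`. -/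
theorem stmt0 {n : ℕ} (hn : 1 ≤ n) (ψ : QState n) (hψ : ψ ≠ 0)
    (S : Set (Fin n)) (hS : Su2Block ψ S) :
    ∃ U V W : Fin n → Matrix (Fin 2) (Fin 2) ℂ,
      (∀ j ∉ S, U j = 0 ∧ V j = 0 ∧ W j = 0) ∧
      (∀ j ∈ S, U j ∈ su2 ∧ V j ∈ su2 ∧ W j ∈ su2 ∧
        ⁅U j, V j⁆ = W j ∧ ⁅V j, W j⁆ = U j ∧ ⁅W j, U j⁆ = V j) ∧
      ((0 : ℝ), U) ∈ stab ψ ∧ ((0 : ℝ), V) ∈ stab ψ ∧ ((0 : ℝ), W) ∈ stab ψ :=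
  stmt0_general ψ S hS
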